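/- Let a, b be positive real numbers. The FARO loss L(Z, Ẑ) = min over all permutations σ of {1, …, K} of H_G(Z, Ẑ∘σ) is a quasi-metric on binary matrices in {0,1}^{n×K} up to column permutation: (i) L(Z, Ẑ) ≥ 0 for all Z, Ẑ; (ii) L(Z, Ẑ) = 0 if and only if Z = Ẑ∘σ for some permutation σ of {1, …, K}; (iii) L(Z₁, Z₂) + L(Z₂, Z₃) ≥ L(Z₁, Z₃) for all Z₁, Z₂, Z₃ ∈ {0,1}^{n×K}. -/

import Mathlib

/-- The generalized Hamming distance between binary matrices `Z, Ẑ ∈ {0,1}^{n×K}`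
with penalty parameters `a, b`. -/
noncomputable def genHamming {n K : ℕ} (a b : ℝ) (Z Zhat : Fin n → Fin K → Bool) : ℝ :=
  ∑ i : Fin n, ∑ j : Fin K,
    ((if Z i j = true ∧ Zhat i j = false then a else 0) +
     (if Z i j = false ∧ Zhat i j = true then b else 0))

/-- FARO loss: the minimum generalized Hamming distance over all column
permutations of `Ẑ`. -/
noncomputable def faroLoss {n K : ℕ} (a b : ℝ) (Z Zhat : Fin n → Fin K → Bool) : ℝ :=
  Finset.univ.inf' Finset.univ_nonempty
    fun σ : Equiv.Perm (Fin K) => genHamming a b Z (fun i j => Zhat i (σ j))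

/-! The generalized Hamming distance is a sum of per-entry costs, each of which is a
quasi-metric on `Bool`; so it is a quasi-metric on matrices, invariant under permuting the
columns of both arguments. Composing optimal permutations for `(Z₁, Z₂)` and `(Z₂, Z₃)` then
gives a competitor for `(Z₁, Z₃)`, which yields the triangle inequality for the FARO loss. -/

def bitCost (a b : ℝ) (x y : Bool) : ℝ :=
  (if x = true ∧ y = false then a else 0) + (if x = false ∧ y = true then b else 0)

section bitCost

variable {a b : ℝ}

lemma bitCost_nonneg (ha : 0 ≤ a) (hb : 0 ≤ b) (x y : Bool) : 0 ≤ bitCost a b x y := by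
  cases x <;> cases y <;> simp [bitCost, ha, hb]

lemma bitCost_eq_zero_iff (ha : 0 < a) (hb : 0 < b) {x y : Bool} :
    bitCost a b x y = 0 ↔ x = y := by
  cases x <;> cases y <;> simp [bitCost, ha.ne', hb.ne']

lemma bitCost_triangle (ha : 0 ≤ a) (hb : 0 ≤ b) (x y z : Bool) :
    bitCost a b x z ≤ bitCost a b x y + bitCost a b y z := by
  cases x <;> cases y <;> cases z <;> simp [bitCost, ha, hb, add_nonneg]

end bitCost

section genHamming

variable {n K : ℕ} {a b : ℝ}

lemma genHamming_eq_sum_bitCost (Z W : Fin n → Fin K → Bool) :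
    genHamming a b Z W = ∑ i, ∑ j, bitCost a b (Z i j) (W i j) :=
  rfl

lemma genHamming_nonneg (ha : 0 ≤ a) (hb : 0 ≤ b) (Z W : Fin n → Fin K → Bool) :
    0 ≤ genHamming a b Z W :=
  Fintype.sum_nonneg fun _ => Fintype.sum_nonneg fun _ => bitCost_nonneg ha hb _ _

lemma genHamming_eq_zero_iff (ha : 0 < a) (hb : 0 < b) {Z W : Fin n → Fin K → Bool} :
    genHamming a b Z W = 0 ↔ Z = W := by
  have hrow (i : Fin n) : 0 ≤ ∑ j, bitCost a b (Z i j) (W i j) :=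
    Fintype.sum_nonneg fun _ => bitCost_nonneg ha.le hb.le _ _
  rw [genHamming_eq_sum_bitCost, Finset.sum_eq_zero_iff_of_nonneg fun i _ => hrow i]
  simp only [Finset.mem_univ, true_implies, funext_iff, bitCost_eq_zero_iff ha hb,
    Finset.sum_eq_zero_iff_of_nonneg fun _ _ => bitCost_nonneg ha.le hb.le _ _]

lemma genHamming_self (Z : Fin n → Fin K → Bool) : genHamming a b Z Z = 0 := by
  simp [genHamming]

lemma genHamming_triangle (ha : 0 ≤ a) (hb : 0 ≤ b) (X Y Z : Fin n → Fin K → Bool) :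
    genHamming a b X Z ≤ genHamming a b X Y + genHamming a b Y Z := by
  simp only [genHamming_eq_sum_bitCost, ← Finset.sum_add_distrib]
  exact Finset.sum_le_sum fun _ _ => Finset.sum_le_sum fun _ _ => bitCost_triangle ha hb _ _ _

lemma genHamming_permCols (σ : Equiv.Perm (Fin K)) (Z W : Fin n → Fin K → Bool) :
    genHamming a b (fun i j => Z i (σ j)) (fun i j => W i (σ j)) = genHamming a b Z W :=
  Finset.sum_congr rfl fun i _ => Equiv.sum_comp σ fun j => bitCost a b (Z i j) (W i j)

end genHamming

section faroLoss

variable {n K : ℕ} {a b : ℝ}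

lemma faroLoss_le_genHamming (Z W : Fin n → Fin K → Bool) (σ : Equiv.Perm (Fin K)) :
    faroLoss a b Z W ≤ genHamming a b Z (fun i j => W i (σ j)) :=
  Finset.inf'_le _ (Finset.mem_univ σ)

lemma exists_faroLoss_eq_genHamming (Z W : Fin n → Fin K → Bool) :
    ∃ σ : Equiv.Perm (Fin K), faroLoss a b Z W = genHamming a b Z (fun i j => W i (σ j)) := by
  obtain ⟨σ, -, hσ⟩ := Finset.exists_mem_eq_inf' Finset.univ_nonempty
    fun σ : Equiv.Perm (Fin K) => genHamming a b Z (fun i j => W i (σ j))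
  exact ⟨σ, hσ⟩

lemma faroLoss_nonneg (ha : 0 ≤ a) (hb : 0 ≤ b) (Z W : Fin n → Fin K → Bool) :
    0 ≤ faroLoss a b Z W :=
  Finset.le_inf' _ _ fun _ _ => genHamming_nonneg ha hb _ _

lemma faroLoss_eq_zero_iff (ha : 0 < a) (hb : 0 < b) (Z W : Fin n → Fin K → Bool) :
    faroLoss a b Z W = 0 ↔ ∃ σ : Equiv.Perm (Fin K), Z = fun i j => W i (σ j) := by
  constructor
  · intro h
    obtain ⟨σ, hσ⟩ := exists_faroLoss_eq_genHamming (a := a) (b := b) Z W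
    exact ⟨σ, (genHamming_eq_zero_iff ha hb).mp (hσ ▸ h)⟩
  · rintro ⟨σ, rfl⟩
    exact le_antisymm ((faroLoss_le_genHamming _ W σ).trans_eq (genHamming_self _))
      (faroLoss_nonneg ha.le hb.le _ _)

lemma faroLoss_triangle (ha : 0 ≤ a) (hb : 0 ≤ b) (Z₁ Z₂ Z₃ : Fin n → Fin K → Bool) :
    faroLoss a b Z₁ Z₃ ≤ faroLoss a b Z₁ Z₂ + faroLoss a b Z₂ Z₃ := by
  obtain ⟨σ, hσ⟩ := exists_faroLoss_eq_genHamming (a := a) (b := b) Z₁ Z₂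
  obtain ⟨τ, hτ⟩ := exists_faroLoss_eq_genHamming (a := a) (b := b) Z₂ Z₃
  calc faroLoss a b Z₁ Z₃
      ≤ genHamming a b Z₁ (fun i j => Z₃ i (τ (σ j))) := faroLoss_le_genHamming _ _ (σ.trans τ)
    _ ≤ genHamming a b Z₁ (fun i j => Z₂ i (σ j))
        + genHamming a b (fun i j => Z₂ i (σ j)) (fun i j => Z₃ i (τ (σ j))) :=
      genHamming_triangle ha hb _ _ _
    _ = faroLoss a b Z₁ Z₂ + faroLoss a b Z₂ Z₃ := by
      rw [hσ, hτ, genHamming_permCols σ Z₂ fun i j => Z₃ i (τ j)]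

end faroLoss

/-- FARO loss is a quasi-metric on binary matrices up to column permutation:
it is nonnegative, vanishes exactly when the two matrices agree up to a column
permutation, and satisfies the triangle inequality. -/
theorem faroLoss_quasiMetric {n K : ℕ} (a b : ℝ) (ha : 0 < a) (hb : 0 < b) :
    (∀ Z Zhat : Fin n → Fin K → Bool, 0 ≤ faroLoss a b Z Zhat) ∧
    (∀ Z Zhat : Fin n → Fin K → Bool,
      faroLoss a b Z Zhat = 0 ↔ ∃ σ : Equiv.Perm (Fin K), Z = fun i j => Zhat i (σ j)) ∧
    (∀ Z₁ Z₂ Z₃ : Fin n → Fin K → Bool,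
      faroLoss a b Z₁ Z₃ ≤ faroLoss a b Z₁ Z₂ + faroLoss a b Z₂ Z₃) := by
  exact ⟨faroLoss_nonneg ha.le hb.le, faroLoss_eq_zero_iff ha hb, faroLoss_triangle ha.le hb.le⟩
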